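/- arXiv:2406.13465 — 2 statements merged into one kernel-verified Lean document; each statement's English description precedes it below -/
import Mathlib

section
/- Let α₂ ≠ α₃ be positive reals and γ(s) = (α₂ cos s, α₃ sin s). If (s₀, t₀) is a critical point of f(s,t) = |γ(s) − γ(t)|² with γ(s₀) ≠ γ(t₀), then the chord from γ(s₀) to γ(t₀) lies on a coordinate axis of the ellipse: either γ(s₀) = −γ(t₀) with sin s₀ = 0 (the chord is the horizontal axis) or γ(s₀) = −γ(t₀) with cos s₀ = 0 (the chord is the vertical axis). -/
open Real
open scoped RealInnerProductSpace

/-- The point `(a, b)` of the Euclidean plane. -/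
noncomputable def vec2 (a b : ℝ) : EuclideanSpace ℝ (Fin 2) :=
  (WithLp.equiv 2 (Fin 2 → ℝ)).symm ![a, b]

lemma vec2_eq_iff (a b c d : ℝ) : vec2 a b = vec2 c d ↔ (a = c ∧ b = d) := by
  constructor
  · intro h
    have h0 := congrFun (congrArg (WithLp.equiv 2 (Fin 2 → ℝ)) h) 0
    have h1 := congrFun (congrArg (WithLp.equiv 2 (Fin 2 → ℝ)) h) 1
    simp [vec2] at h0 h1
    exact ⟨h0, h1⟩
  · rintro ⟨rfl, rfl⟩; rfl

lemma neg_vec2 (a b : ℝ) : -vec2 a b = vec2 (-a) (-b) := by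
  ext i; fin_cases i <;> simp [vec2]

theorem stmt_8 (α₂ α₃ : ℝ) (h₂ : 0 < α₂) (h₃ : 0 < α₃) (hne : α₂ ≠ α₃) (s₀ t₀ : ℝ)
    (γ : ℝ → EuclideanSpace ℝ (Fin 2)) (hγ : γ = fun s => vec2 (α₂ * cos s) (α₃ * sin s))
    (γ' : ℝ → EuclideanSpace ℝ (Fin 2))
    (hγ' : γ' = fun s => vec2 (-(α₂ * sin s)) (α₃ * cos s))
    (hpts : γ s₀ ≠ γ t₀)
    (hcrit₁ : ⟪γ s₀ - γ t₀, γ' s₀⟫ = 0)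
    (hcrit₂ : ⟪γ s₀ - γ t₀, γ' t₀⟫ = 0) :
    (γ s₀ = -γ t₀ ∧ sin s₀ = 0) ∨ (γ s₀ = -γ t₀ ∧ cos s₀ = 0) := by
  subst hγ hγ'
  simp only [vec2, PiLp.inner_apply, Fin.sum_univ_two] at hcrit₁ hcrit₂
  simp at hcrit₁ hcrit₂
  set cs := cos s₀ with hcs
  set ss := sin s₀ with hss
  set ct := cos t₀ with hct
  set st := sin t₀ with hst
  have pys : cs ^ 2 + ss ^ 2 = 1 := cos_sq_add_sin_sq s₀
  have pyt : ct ^ 2 + st ^ 2 = 1 := cos_sq_add_sin_sq t₀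
  have e1 : -(α₂ ^ 2 * (cs - ct)) * ss + (α₃ ^ 2 * (ss - st)) * cs = 0 := by
    linear_combination hcrit₁
  have e2 : -(α₂ ^ 2 * (cs - ct)) * st + (α₃ ^ 2 * (ss - st)) * ct = 0 := by
    linear_combination hcrit₂
  have hα₂ : (0:ℝ) < α₂ ^ 2 := by positivity
  have hα₃ : (0:ℝ) < α₃ ^ 2 := by positivity
  have hpts' : ¬(cs = ct ∧ ss = st) := by
    rintro ⟨h1, h2⟩
    apply hpts
    show vec2 (α₂ * cs) (α₃ * ss) = vec2 (α₂ * ct) (α₃ * st)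
    rw [h1, h2]
  by_cases hd : ss * ct - st * cs = 0
  · -- determinant zero: points are equal or antipodal
    have hdot : (cs * ct + ss * st) ^ 2 = 1 := by
      linear_combination (ct ^ 2 + st ^ 2) * pys + pyt - (ss * ct - st * cs) * hd
    have hfact : (cs * ct + ss * st - 1) * (cs * ct + ss * st + 1) = 0 := by
      linear_combination hdot
    rcases mul_eq_zero.mp hfact with h | h
    · -- dot = 1 : points equal, contradiction
      exfalso
      have hz : (cs - ct) ^ 2 + (ss - st) ^ 2 = 0 := by linear_combination pys + pyt - 2 * h
      obtain ⟨h1, h2⟩ := (add_eq_zero_iff_of_nonneg (sq_nonneg _) (sq_nonneg _)).mp hz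
      have h1' := sub_eq_zero.mp (pow_eq_zero_iff two_ne_zero |>.mp h1)
      have h2' := sub_eq_zero.mp (pow_eq_zero_iff two_ne_zero |>.mp h2)
      exact hpts' ⟨h1', h2'⟩
    · -- dot = -1 : antipodal
      have hz : (cs + ct) ^ 2 + (ss + st) ^ 2 = 0 := by linear_combination pys + pyt + 2 * h
      obtain ⟨h1, h2⟩ := (add_eq_zero_iff_of_nonneg (sq_nonneg _) (sq_nonneg _)).mp hz
      have hc : ct = -cs := by
        have := pow_eq_zero_iff two_ne_zero |>.mp h1; linarith
      have hs : st = -ss := by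
        have := pow_eq_zero_iff two_ne_zero |>.mp h2; linarith
      have hanti : vec2 (α₂ * cs) (α₃ * ss) = -vec2 (α₂ * ct) (α₃ * st) := by
        rw [neg_vec2, vec2_eq_iff, hc, hs]; constructor <;> ring
      have hsq : α₂ ^ 2 ≠ α₃ ^ 2 := by
        intro h
        have h' : (α₂ - α₃) * (α₂ + α₃) = 0 := by linear_combination h
        rcases mul_eq_zero.mp h' with h'' | h''
        · exact hne (by linarith)
        · linarith
      have hprod : ss * cs = 0 := by
        have : 2 * (α₃ ^ 2 - α₂ ^ 2) * (ss * cs) = 0 := by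
          rw [hc, hs] at e1; linear_combination e1
        rcases mul_eq_zero.mp this with h' | h'
        · rcases mul_eq_zero.mp h' with h'' | h''
          · norm_num at h''
          · exact absurd (by linarith : α₂ ^ 2 = α₃ ^ 2) hsq
        · exact h'
      rcases mul_eq_zero.mp hprod with h' | h'
      · exact Or.inl ⟨hanti, h'⟩
      · exact Or.inr ⟨hanti, h'⟩
  · exfalso
    have hA : α₂ ^ 2 * (cs - ct) = 0 := by
      have h' : (α₂ ^ 2 * (cs - ct)) * (ss * ct - st * cs) = 0 := by
        linear_combination cs * e2 - ct * e1
      exact (mul_eq_zero.mp h').resolve_right hd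
    have hB : α₃ ^ 2 * (ss - st) = 0 := by
      have h' : (α₃ ^ 2 * (ss - st)) * (ss * ct - st * cs) = 0 := by
        linear_combination ss * e2 - st * e1
      exact (mul_eq_zero.mp h').resolve_right hd
    have hc : cs = ct := by
      rcases mul_eq_zero.mp hA with h | h
      · exact absurd h (ne_of_gt hα₂)
      · linarith
    have hs : ss = st := by
      rcases mul_eq_zero.mp hB with h | h
      · exact absurd h (ne_of_gt hα₃)
      · linarith
    exact hpts' ⟨hc, hs⟩
end

section
/- A straight segment inside the ellipse E = {(y,z) : (y/α₂)² + (z/α₃)² ≤ 1} with α₂ ≠ α₃, whose endpoints lie on ∂E and which meets ∂E orthogonally at both endpoints, coincides with the major or the minor axis of E (i.e., it is the segment from (α₂,0) to (−α₂,0) or from (0,α₃) to (0,−α₃)). -/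
/-!
The tangent-orthogonality conditions at the two endpoints `p`, `q` differ by
`(q₀ - p₀)(q₁ - p₁)(1/α₂² - 1/α₃²)`, so for a non-circular ellipse the chord is parallel to an
axis. Orthogonality at `p` then puts the chord on that axis, and a chord of the ellipse lying on
an axis joins the two vertices on it.
-/

open scoped RealInnerProductSpace

/-- A tangent vector to the boundary of the ellipse with semi-axes `α₂, α₃`
at the point `p` (orthogonal to the gradient `(2p₁/α₂², 2p₂/α₃²)`). -/
noncomputable def tangentVec (α₂ α₃ : ℝ) (p : EuclideanSpace ℝ (Fin 2)) :
    EuclideanSpace ℝ (Fin 2) :=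
  vec2 (-(p 1 / α₃ ^ 2)) (p 0 / α₂ ^ 2)

@[simp]
lemma vec2_apply_zero (a b : ℝ) : vec2 a b 0 = a := rfl

@[simp]
lemma vec2_apply_one (a b : ℝ) : vec2 a b 1 = b := rfl

lemma eq_vec2 (x : EuclideanSpace ℝ (Fin 2)) : x = vec2 (x 0) (x 1) := by
  ext i
  fin_cases i <;> rfl

lemma inner_tangentVec (α₂ α₃ : ℝ) (v p : EuclideanSpace ℝ (Fin 2)) :
    ⟪v, tangentVec α₂ α₃ p⟫ = -(v 0 * (p 1 / α₃ ^ 2)) + v 1 * (p 0 / α₂ ^ 2) := by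
  simp only [tangentVec, PiLp.inner_apply, Fin.sum_univ_two, vec2_apply_zero, vec2_apply_one,
    RCLike.inner_apply, conj_trivial]
  ring

lemma eq_or_eq_of_inner_tangentVec_eq_zero {α₂ α₃ : ℝ} (hsq : α₂ ^ 2 ≠ α₃ ^ 2)
    {p q : EuclideanSpace ℝ (Fin 2)} (horth₁ : ⟪q - p, tangentVec α₂ α₃ p⟫ = 0)
    (horth₂ : ⟪q - p, tangentVec α₂ α₃ q⟫ = 0) :
    q 0 = p 0 ∨ q 1 = p 1 := by
  rw [inner_tangentVec] at horth₁ horth₂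
  simp only [PiLp.sub_apply] at horth₁ horth₂
  have hprod : (q 0 - p 0) * (q 1 - p 1) * (1 / α₂ ^ 2 - 1 / α₃ ^ 2) = 0 := by
    linear_combination horth₂ - horth₁
  have hcoef : 1 / α₂ ^ 2 - 1 / α₃ ^ 2 ≠ 0 := by
    rw [sub_ne_zero, Ne, one_div, one_div, inv_inj]
    exact hsq
  simpa only [mul_eq_zero, sub_eq_zero] using (mul_eq_zero.1 hprod).resolve_right hcoef

/-- `hnormal` says that the chord from `(x₁, y)` to `(x₂, y)` is orthogonal to the tangent of
the ellipse `(x/a)² + (y/b)² = 1` at `(x₁, y)`. -/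
lemma horizontal_chord_eq_axis {a b x₁ x₂ y : ℝ} (ha : a ≠ 0) (hb : b ≠ 0)
    (h₁ : (x₁ / a) ^ 2 + (y / b) ^ 2 = 1) (h₂ : (x₂ / a) ^ 2 + (y / b) ^ 2 = 1)
    (hx : x₁ ≠ x₂) (hnormal : (x₂ - x₁) * (y / b ^ 2) = 0) :
    y = 0 ∧ x₂ = -x₁ ∧ (x₁ = a ∨ x₁ = -a) := by
  have hy : y = 0 := by
    simpa [sub_eq_zero, hx.symm, hb] using hnormal
  subst hy
  simp only [zero_div, ne_eq, OfNat.ofNat_ne_zero, not_false_eq_true, zero_pow, add_zero,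
    div_pow, div_eq_one_iff_eq (pow_ne_zero 2 ha)] at h₁ h₂
  have hx₂ : x₂ ^ 2 = x₁ ^ 2 := h₂.trans h₁.symm
  refine ⟨rfl, ?_, sq_eq_sq_iff_eq_or_eq_neg.1 h₁⟩
  exact (sq_eq_sq_iff_eq_or_eq_neg.1 hx₂).resolve_left hx.symm

theorem stmt_9_general (α₂ α₃ : ℝ) (h₂ : 0 < α₂) (h₃ : 0 < α₃) (hne : α₂ ≠ α₃)
    (p q : EuclideanSpace ℝ (Fin 2)) (hpq : p ≠ q)
    (hp : (p 0 / α₂) ^ 2 + (p 1 / α₃) ^ 2 = 1)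
    (hq : (q 0 / α₂) ^ 2 + (q 1 / α₃) ^ 2 = 1)
    (horth₁ : ⟪q - p, tangentVec α₂ α₃ p⟫ = 0)
    (horth₂ : ⟪q - p, tangentVec α₂ α₃ q⟫ = 0) :
    segment ℝ p q = segment ℝ (vec2 α₂ 0) (vec2 (-α₂) 0)
      ∨ segment ℝ p q = segment ℝ (vec2 0 α₃) (vec2 0 (-α₃)) := by
  have hsq : α₂ ^ 2 ≠ α₃ ^ 2 := fun h ↦ hne ((pow_left_inj₀ h₂.le h₃.le two_ne_zero).1 h)
  have hnormal := horth₁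
  rw [inner_tangentVec] at hnormal
  simp only [PiLp.sub_apply] at hnormal
  rcases eq_or_eq_of_inner_tangentVec_eq_zero hsq horth₁ horth₂ with h0 | h1
  · obtain ⟨hp0, hq1, hp1⟩ := horizontal_chord_eq_axis (x₁ := p 1) (x₂ := q 1) (y := p 0)
      h₃.ne' h₂.ne' (by linarith) (by rw [h0] at hq; linarith)
      (fun h ↦ hpq (by rw [eq_vec2 p, eq_vec2 q, h0, h])) (by rw [h0] at hnormal; linarith)
    right
    rw [eq_vec2 p, eq_vec2 q, h0, hp0, hq1]
    rcases hp1 with h | h <;> rw [h]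
    rw [neg_neg, segment_symm]
  · obtain ⟨hp1, hq0, hp0⟩ := horizontal_chord_eq_axis (x₁ := p 0) (x₂ := q 0) (y := p 1)
      h₂.ne' h₃.ne' hp (by rw [h1] at hq; exact hq)
      (fun h ↦ hpq (by rw [eq_vec2 p, eq_vec2 q, h1, h])) (by rw [h1] at hnormal; linarith)
    left
    rw [eq_vec2 p, eq_vec2 q, h1, hp1, hq0]
    rcases hp0 with h | h <;> rw [h]
    rw [neg_neg, segment_symm]

theorem stmt_9 (α₂ α₃ : ℝ) (h₂ : 0 < α₂) (h₃ : 0 < α₃) (hne : α₂ ≠ α₃)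
    (p q : EuclideanSpace ℝ (Fin 2)) (hpq : p ≠ q)
    (hp : (p 0 / α₂) ^ 2 + (p 1 / α₃) ^ 2 = 1)
    (hq : (q 0 / α₂) ^ 2 + (q 1 / α₃) ^ 2 = 1)
    (hseg : segment ℝ p q ⊆ {x : EuclideanSpace ℝ (Fin 2) |
        (x 0 / α₂) ^ 2 + (x 1 / α₃) ^ 2 ≤ 1})
    (horth₁ : ⟪q - p, tangentVec α₂ α₃ p⟫ = 0)
    (horth₂ : ⟪q - p, tangentVec α₂ α₃ q⟫ = 0) :
    segment ℝ p q = segment ℝ (vec2 α₂ 0) (vec2 (-α₂) 0)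
      ∨ segment ℝ p q = segment ℝ (vec2 0 α₃) (vec2 0 (-α₃)) :=
  stmt_9_general α₂ α₃ h₂ h₃ hne p q hpq hp hq horth₁ horth₂
end
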